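/- Let E be a Riesz space with weak order unit e and let F be a Dedekind complete Riesz space. Endow ba(C_e,F) with the order μ ≤ ν iff ν − μ is an order bounded F-valued charge. Then ba(C_e,F) is a Riesz space, and for all μ,ν ∈ ba(C_e,F) and p ∈ C_e: (μ ∨ ν)(p) = sup{μ(q) + ν(p−q) : q ∈ C_e, q ≤ p}; (μ ∧ ν)(p) = inf{μ(q) + ν(p−q) : q ∈ C_e, q ≤ p}; |μ|(p) = sup{μ(q) − μ(p−q) : q ∈ C_e, q ≤ p}; μ⁺(p) = sup{μ(q) : q ∈ C_e, q ≤ p}; μ⁻(p) = −inf{μ(q) : q ∈ C_e, q ≤ p}. -/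

import Mathlib

open scoped Classical

noncomputable section

namespace RieszPaper

universe u v w

/-! ### Basic Riesz space notions -/

section BasicDefs

variable {E : Type u} [Lattice E] [AddCommGroup E]

/-- The positive part `x ⊔ 0`. -/
def rpos (x : E) : E := x ⊔ 0

/-- The set of components of `e`, i.e. elements `p` with `p ⊓ (e - p) = 0`. -/
def Comp (e : E) : Set E := {p | p ⊓ (e - p) = 0}

/-- Disjoint complement of a set. -/
def disjC (S : Set E) : Set E := {x | ∀ y ∈ S, |x| ⊓ |y| = 0}

/-- The principal band generated by `f` (as double disjoint complement). -/
def pBand (f : E) : Set E := disjC (disjC {f})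

/-- `e` is a weak order unit: `e > 0` and the band generated by `e` is all of `E`. -/
def IsWeakUnit (e : E) : Prop := 0 < e ∧ ∀ x : E, 0 ≤ x → x ⊓ e = 0 → x = 0

/-- The chain `x ⊓ n•|f|`, whose supremum is the band projection of `x ≥ 0`
onto the band generated by `f`. -/
def projChain (f x : E) : Set E := {y | ∃ n : ℕ, y = x ⊓ n • |f|}

/-- Band projection of a positive element onto the band generated by `f`. -/
def projP (f x : E) : E := if h : ∃ s, IsLUB (projChain f x) s then h.choose else 0

/-- Band projection onto the principal band generated by `f`. -/
def proj (f x : E) : E := projP f (rpos x) - projP f (rpos (-x))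

/-- The principal projection property. -/
def HasPPP (α : Type u) [Lattice α] [AddCommGroup α] : Prop :=
  ∀ f x : α, 0 ≤ x → ∃ s, IsLUB (projChain f x) s

/-- A subset is sequentially order closed. -/
def SeqOrderClosed (D : Set E) : Prop :=
  (∀ (x : ℕ → E) (l : E), (∀ n, x n ∈ D) → Monotone x → IsLUB (Set.range x) l → l ∈ D) ∧
  (∀ (x : ℕ → E) (l : E), (∀ n, x n ∈ D) → Antitone x → IsGLB (Set.range x) l → l ∈ D)

end BasicDefs

/-! ### Charges on components -/

section Charges

variable {E : Type u} [Lattice E] [AddCommGroup E]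
variable {F : Type v} [Lattice F] [AddCommGroup F]

/-- `μ` is an `F`-valued signed charge on the components of `e`. -/
def IsChargeOn (e : E) (μ : E → F) : Prop :=
  μ 0 = 0 ∧ ∀ p q : E, p ∈ Comp e → q ∈ Comp e → p ⊓ q = 0 → μ (p + q) = μ p + μ q

/-- `μ` is order bounded on the components of `e`. -/
def OrdBddOn (e : E) (μ : E → F) : Prop :=
  ∃ g : F, 0 ≤ g ∧ ∀ p ∈ Comp e, |μ p| ≤ g

/-- `ba(C_e, F)`: order bounded signed `F`-valued charges on the components of `e`. -/
def baSet (e : E) : Set (E → F) := {μ | IsChargeOn e μ ∧ OrdBddOn e μ}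

/-- The order on charges: `μ ≤ ν` iff `ν - μ` is positive on components. -/
def baLe (e : E) (μ ν : E → F) : Prop := ∀ p ∈ Comp e, μ p ≤ ν p

/-- `η` is the least upper bound of `S ⊆ ba(C_e,F)` within `ba(C_e,F)`. -/
def IsLUBba (e : E) (S : Set (E → F)) (η : E → F) : Prop :=
  η ∈ baSet e ∧ (∀ μ ∈ S, baLe e μ η) ∧
    ∀ ξ ∈ baSet e, (∀ μ ∈ S, baLe e μ ξ) → baLe e η ξ

/-- `η` is the greatest lower bound of `S ⊆ ba(C_e,F)` within `ba(C_e,F)`. -/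
def IsGLBba (e : E) (S : Set (E → F)) (η : E → F) : Prop :=
  η ∈ baSet e ∧ (∀ μ ∈ S, baLe e η μ) ∧
    ∀ ξ ∈ baSet e, (∀ μ ∈ S, baLe e ξ μ) → baLe e ξ η

end Charges

section ChargesCCL

variable {E : Type u} [Lattice E] [AddCommGroup E]
variable {F : Type v} [ConditionallyCompleteLattice F] [AddCommGroup F]

/-- Pointwise formula for the supremum of two charges. -/
def chSupAt (e : E) (μ ν : E → F) (p : E) : F :=
  sSup {v | ∃ q, q ∈ Comp e ∧ q ≤ p ∧ v = μ q + ν (p - q)}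

/-- Pointwise formula for the infimum of two charges. -/
def chInfAt (e : E) (μ ν : E → F) (p : E) : F :=
  sInf {v | ∃ q, q ∈ Comp e ∧ q ≤ p ∧ v = μ q + ν (p - q)}

/-- The modulus of a charge, via the Riesz–Kantorovich-type formula. -/
def chargeAbs (e : E) (μ : E → F) : E → F :=
  fun p => sSup {v | ∃ q, q ∈ Comp e ∧ q ≤ p ∧ v = μ q - μ (p - q)}

/-- The positive part of a charge. -/
def chargePos (e : E) (μ : E → F) : E → F :=
  fun p => sSup {v | ∃ q, q ∈ Comp e ∧ q ≤ p ∧ v = μ q}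

/-- The negative part of a charge. -/
def chargeNeg (e : E) (μ : E → F) : E → F :=
  fun p => sSup {v | ∃ q, q ∈ Comp e ∧ q ≤ p ∧ v = -(μ q)}

end ChargesCCL

/-! ### Operators -/

section Ops

variable {E : Type u} [Lattice E] [AddCommGroup E] [Module ℝ E]

def PosOn (Lp : Set E) (φ : E → E) : Prop := ∀ f ∈ Lp, 0 ≤ f → 0 ≤ φ f

def AddOn (Lp : Set E) (φ : E → E) : Prop :=
  ∀ f g : E, f ∈ Lp → g ∈ Lp → φ (f + g) = φ f + φ g

def SmulOn (Lp : Set E) (φ : E → E) : Prop :=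
  ∀ (r : ℝ) (f : E), f ∈ Lp → φ (r • f) = r • φ f

/-- `φ` is a regular operator on `Lp`: a difference of two positive linear maps. -/
def RegularOn (Lp : Set E) (φ : E → E) : Prop :=
  ∃ ψ₁ ψ₂ : E → E, AddOn Lp ψ₁ ∧ AddOn Lp ψ₂ ∧ SmulOn Lp ψ₁ ∧ SmulOn Lp ψ₂ ∧
    PosOn Lp ψ₁ ∧ PosOn Lp ψ₂ ∧ ∀ f ∈ Lp, φ f = ψ₁ f - ψ₂ f

/-- Uniform convergence of a sequence with regulator `u`. -/
def UnifConv (u : E) (s : ℕ → E) (f : E) : Prop :=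
  ∃ ε : ℕ → ℝ, Antitone ε ∧ Filter.Tendsto ε Filter.atTop (nhds 0) ∧
    ∀ n, |f - s n| ≤ ε n • u

end Ops

/-! ### Conditional expectation operators -/

section CondExp

variable {E : Type u} [ConditionallyCompleteLattice E] [AddCommGroup E] [Module ℝ E]

/-- `(E, e, T)` is a conditional Riesz triple: `e` is a weak order unit and `T` is a
strictly positive conditional expectation operator with `T e = e` whose range is a
Dedekind complete Riesz subspace. -/
structure IsCondTriple (e : E) (T : E →ₗ[ℝ] E) : Prop where
  weakUnit : IsWeakUnit e
  pos : ∀ x : E, 0 ≤ x → 0 ≤ T x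
  strictPos : ∀ x : E, 0 < x → 0 < T x
  ordCont : ∀ (A : Set E) (s : E), A.Nonempty → DirectedOn (· ≤ ·) A →
    IsLUB A s → IsLUB (T '' A) (T s)
  idem : ∀ x : E, T (T x) = T x
  unitFix : T e = e
  rangeSupClosed : ∀ x y : E, x ∈ Set.range T → y ∈ Set.range T → x ⊔ y ∈ Set.range T
  rangeDedekind : ∀ A : Set E, A ⊆ Set.range T → A.Nonempty → BddAbove A →
    sSup A ∈ Set.range T

end CondExp

/-! ### Universal completion and T-universal completeness -/

section Univ

variable {E : Type u} {G : Type v}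
variable [ConditionallyCompleteLattice E] [AddCommGroup E] [Module ℝ E]
variable [ConditionallyCompleteLattice G] [AddCommGroup G] [Module ℝ G]

/-- `j : E → G` realizes `G` as a universal completion of `E`. -/
structure IsUnivCompletion (j : E →ₗ[ℝ] G) : Prop where
  bipos : ∀ x : E, 0 ≤ j x ↔ 0 ≤ x
  latHom : ∀ x y : E, j (x ⊔ y) = j x ⊔ j y
  dense : ∀ z : G, 0 < z → ∃ x : E, 0 < j x ∧ j x ≤ z
  univComplete : ∀ S : Set G, (∀ x ∈ S, 0 ≤ x) →
    S.Pairwise (fun a b => a ⊓ b = 0) → BddAbove S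

/-- `E` is `T`-universally complete (relative to the universal completion `j : E → G`):
every nonempty upwards directed subset `A ⊆ E` such that `j[T[A]]` is bounded above in
`G` has a supremum in `E`. -/
def TUnivComplete (T : E →ₗ[ℝ] E) (j : E →ₗ[ℝ] G) : Prop :=
  ∀ A : Set E, A.Nonempty → DirectedOn (· ≤ ·) A →
    BddAbove (⇑j '' (⇑T '' A)) → BddAbove A

end Univ

/-- `mul` is a commutative `f`-algebra multiplication with unit `u`. -/
structure IsFAlgebraMul {G : Type v} [Lattice G] [AddCommGroup G] [Module ℝ G]
    (u : G) (mul : G → G → G) : Prop where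
  comm : ∀ x y, mul x y = mul y x
  assoc : ∀ x y z, mul (mul x y) z = mul x (mul y z)
  add_left : ∀ x y z, mul (x + y) z = mul x z + mul y z
  smul_left : ∀ (r : ℝ) (x y), mul (r • x) y = r • mul x y
  one_mul : ∀ x, mul u x = x
  mul_nonneg : ∀ x y, 0 ≤ x → 0 ≤ y → 0 ≤ mul x y
  disj : ∀ x y z, x ⊓ y = 0 → 0 ≤ z → mul x z ⊓ y = 0

/-! ### Bundled T-universally complete conditional Riesz triples -/

/-- A `T`-universally complete conditional Riesz triple `(E, e, T)`, together with a
universal completion `j : E → G` carrying its `f`-algebra multiplication (with unit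
`j e`).  Since `E = L¹(T)` is an `R(T)`-module, products of elements of `L^∞(T)` with
elements of `E` again lie in `E` (`mulClosed`). -/
structure CRT (E : Type u) (G : Type v)
    [ConditionallyCompleteLattice E] [AddCommGroup E] [Module ℝ E]
    [CovariantClass E E (· + ·) (· ≤ ·)] [PosSMulMono ℝ E]
    [ConditionallyCompleteLattice G] [AddCommGroup G] [Module ℝ G]
    [CovariantClass G G (· + ·) (· ≤ ·)] [PosSMulMono ℝ G] where
  e : E
  T : E →ₗ[ℝ] E
  j : E →ₗ[ℝ] G
  mul : G → G → G
  triple : IsCondTriple e T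
  compl : IsUnivCompletion j
  falg : IsFAlgebraMul (j e) mul
  tuc : TUnivComplete T j
  mulClosed : ∀ f g : E, (∃ h : E, h ∈ Set.range T ∧ 0 ≤ h ∧ |f| ≤ h) →
    mul (j f) (j g) ∈ Set.range ⇑j

namespace CRT

variable {E : Type u} {G : Type v}
variable [ConditionallyCompleteLattice E] [AddCommGroup E] [Module ℝ E]
  [CovariantClass E E (· + ·) (· ≤ ·)] [PosSMulMono ℝ E]
variable [ConditionallyCompleteLattice G] [AddCommGroup G] [Module ℝ G]
  [CovariantClass G G (· + ·) (· ≤ ·)] [PosSMulMono ℝ G]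
variable (C : CRT E G)

/-- The range `R(T)`. -/
def R : Set E := Set.range ⇑C.T

/-- The product `g · f` of two elements of `E = L¹(T)`, computed in the universal
completion (meaningful whenever the product lies again in `E`, e.g. for
`g ∈ R(T)` or `g ∈ L^∞(T)`). -/
def sm (g f : E) : E := @Function.invFun E G ⟨0⟩ (⇑C.j) (C.mul (C.j g) (C.j f))

/-- `L^∞(T) = {f : |f| ≤ g for some g ∈ R(T)₊}`. -/
def Linf : Set E := {f | ∃ h ∈ C.R, 0 ≤ h ∧ |f| ≤ h}

/-- The `R(T)`-valued norm `‖f‖_{T,1} = T |f|`. -/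
def nrm1 (f : E) : E := C.T |f|

/-- The `R(T)`-valued norm `‖f‖_{T,∞} = inf {α ∈ R(T)₊ : |f| ≤ α}`. -/
def nrmInf (f : E) : E := sInf {a | a ∈ C.R ∧ 0 ≤ a ∧ |f| ≤ a}

/-- Order bounded signed `R(T)`-valued charges on the components of `u`. -/
def baR (u : E) : Set (E → E) :=
  {μ | IsChargeOn u μ ∧ (∀ p ∈ Comp u, μ p ∈ C.R) ∧
     ∃ g ∈ C.R, 0 ≤ g ∧ ∀ p ∈ Comp u, |μ p| ≤ g}

/-- `ba(T)`: the `T`-absolutely continuous charges in `ba(C_e, R(T))`. -/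
def baT : Set (E → E) :=
  {μ | μ ∈ C.baR C.e ∧ ∀ p ∈ Comp C.e, μ p ∈ pBand (C.T p)}

/-- `x = ∑ αᵢ pᵢ` is a standard representation of the `e`-step function `x` with
`R(T)`-coefficients. -/
def IsStdRep (x : E) (n : ℕ) (α p : Fin n → E) : Prop :=
  (∀ i, α i ∈ C.R) ∧ (∀ i, p i ∈ Comp C.e) ∧
  (∀ i j, i ≠ j → p i ⊓ p j = 0) ∧ (∑ i, p i) = C.e ∧
  x = ∑ i, C.sm (α i) (p i)

/-- `S_e(T)`: the `e`-step functions with `R(T)`-coefficients. -/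
def Steps : Set E := {x | ∃ (n : ℕ) (α p : Fin n → E), C.IsStdRep x n α p}

/-- The integral `I_μ` of a step function: `I_μ (∑ αᵢ pᵢ) = ∑ αᵢ μ(pᵢ)`. -/
def Imu (μ : E → E) (x : E) : E :=
  @Classical.epsilon E ⟨0⟩ fun v =>
    ∃ (n : ℕ) (α p : Fin n → E), C.IsStdRep x n α p ∧ v = ∑ i, C.sm (α i) (μ (p i))

/-- The integral of a positive element of `L^∞(T)` with respect to a positive charge. -/
def intPos (μ : E → E) (f : E) : E :=
  sSup {v | ∃ g ∈ C.Steps, 0 ≤ g ∧ g ≤ f ∧ v = C.Imu μ g}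

/-- The integral `∫ f dμ = ∫ f⁺ dμ⁺ − ∫ f⁻ dμ⁺ − ∫ f⁺ dμ⁻ + ∫ f⁻ dμ⁻`. -/
def integral (μ : E → E) (f : E) : E :=
  C.intPos (chargePos C.e μ) (rpos f) - C.intPos (chargePos C.e μ) (rpos (-f))
    - C.intPos (chargeNeg C.e μ) (rpos f) + C.intPos (chargeNeg C.e μ) (rpos (-f))

/-- Membership in `L^r(Lp, R(T))`: regular linear operators with values in `R(T)`. -/
structure MemLr (Lp : Set E) (φ : E → E) : Prop where
  add : AddOn Lp φ
  smul : SmulOn Lp φ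
  mem : ∀ f ∈ Lp, φ f ∈ C.R
  regular : RegularOn Lp φ

/-- Membership in the `T`-strong dual of `(Lp, nrm)`: `R(T)`-linear, regular,
`nrm`-bounded maps into `R(T)`. -/
structure MemDual (Lp : Set E) (nrm : E → E) (φ : E → E) : Prop where
  add : AddOn Lp φ
  smul : SmulOn Lp φ
  modHom : ∀ g f : E, g ∈ C.R → f ∈ Lp → φ (C.sm g f) = C.sm g (φ f)
  mem : ∀ f ∈ Lp, φ f ∈ C.R
  regular : RegularOn Lp φ
  bdd : ∃ k ∈ C.R, 0 ≤ k ∧ ∀ f ∈ Lp, |φ f| ≤ C.sm k (nrm f)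

/-- The `R(T)`-valued norm on the `T`-strong dual. -/
def dualNorm (Lp : Set E) (nrm : E → E) (φ : E → E) : E :=
  sInf {g | g ∈ C.R ∧ 0 ≤ g ∧ ∀ f ∈ Lp, |φ f| ≤ C.sm g (nrm f)}

/-- `|φ| ≤ |ψ|` in `L^r(Lp, R(T))`, via the Riesz–Kantorovich formula. -/
def OpAbsLe (Lp : Set E) (φ ψ : E → E) : Prop :=
  ∀ f ∈ Lp, 0 ≤ f → ∀ g ∈ Lp, |g| ≤ f →
    |φ g| ≤ sSup {v | ∃ h, h ∈ Lp ∧ |h| ≤ f ∧ v = |ψ h|}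

/-- The canonical partial inverse of `h` in `R(T)`: the element `g` of the band
generated by `|h|` with `h g = P_{|h|} e`. -/
def pinv (h : E) : E :=
  @Classical.epsilon E ⟨0⟩ fun g =>
    g ∈ C.R ∧ g ∈ pBand (|h|) ∧ C.sm h g = proj (|h|) C.e

end CRT

/-! ### Bundled Dedekind complete Riesz spaces, for existential statements -/

structure BRiesz : Type (u + 1) where
  carrier : Type u
  [ccl : ConditionallyCompleteLattice carrier]
  [grp : AddCommGroup carrier]
  [mod : Module ℝ carrier]
  [cov : CovariantClass carrier carrier (· + ·) (· ≤ ·)]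
  [psm : PosSMulMono ℝ carrier]

attribute [instance] BRiesz.ccl BRiesz.grp BRiesz.mod BRiesz.cov BRiesz.psm

/-- `(F, ẽ, T̃)` together with `i : E → F` is a `T`-universal completion of `(E, e, T)`. -/
structure IsTUnivCompletion
    {E : Type u} [ConditionallyCompleteLattice E] [AddCommGroup E] [Module ℝ E]
    {F : Type v} [ConditionallyCompleteLattice F] [AddCommGroup F] [Module ℝ F]
    (e : E) (T : E →ₗ[ℝ] E) (e' : F) (T' : F →ₗ[ℝ] F) (i : E →ₗ[ℝ] F) : Prop where
  triple : IsCondTriple e' T'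
  tuniv : ∃ (U : BRiesz.{v}) (j : F →ₗ[ℝ] U.carrier),
    IsUnivCompletion j ∧ TUnivComplete T' j
  bipos : ∀ x : E, 0 ≤ i x ↔ 0 ≤ x
  latHom : ∀ x y : E, i (x ⊔ y) = i x ⊔ i y
  dense : ∀ z : F, 0 < z → ∃ x : E, 0 < i x ∧ i x ≤ z
  unit : i e = e'
  comm : ∀ x : E, T' (i x) = i (T x)


/-! ### Powers via functional calculus, for the spaces `L^p(T)` -/

/-- A `T`-universally complete conditional Riesz triple together with the power
functions `x ↦ x^p` (`x ≥ 0`, `p > 0`) of the functional calculus on the universal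
completion. -/
structure CRTP (E : Type u) (G : Type v)
    [ConditionallyCompleteLattice E] [AddCommGroup E] [Module ℝ E]
    [CovariantClass E E (· + ·) (· ≤ ·)] [PosSMulMono ℝ E]
    [ConditionallyCompleteLattice G] [AddCommGroup G] [Module ℝ G]
    [CovariantClass G G (· + ·) (· ≤ ·)] [PosSMulMono ℝ G]
    extends CRT E G where
  epow : G → ℝ → G
  epow_one : ∀ x : G, 0 ≤ x → epow x 1 = x
  epow_nonneg : ∀ (x : G) (p : ℝ), 0 ≤ x → 0 < p → 0 ≤ epow x p
  epow_mono : ∀ (x y : G) (p : ℝ), 0 ≤ x → x ≤ y → 0 < p → epow x p ≤ epow y p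
  epow_unit : ∀ p : ℝ, 0 < p → epow (toCRT.j toCRT.e) p = toCRT.j toCRT.e
  epow_exp_mul : ∀ (x : G) (p q : ℝ), 0 ≤ x → 0 < p → 0 < q →
    epow (epow x p) q = epow x (p * q)
  epow_mul : ∀ (x y : G) (p : ℝ), 0 ≤ x → 0 ≤ y → 0 < p →
    epow (toCRT.mul x y) p = toCRT.mul (epow x p) (epow y p)
  epow_succ : ∀ (x : G) (n : ℕ), 0 ≤ x → 0 < n →
    epow x ((n : ℝ) + 1) = toCRT.mul (epow x (n : ℝ)) x
  epow_sup : ∀ (x y : G) (p : ℝ), 0 ≤ x → 0 ≤ y → 0 < p →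
    epow (x ⊔ y) p = epow x p ⊔ epow y p
  epow_rangeT : ∀ (x : E) (p : ℝ), 0 ≤ x → 0 < p → x ∈ Set.range ⇑toCRT.T →
    epow (toCRT.j x) p ∈ ⇑toCRT.j '' Set.range ⇑toCRT.T

namespace CRTP

variable {E : Type u} {G : Type v}
variable [ConditionallyCompleteLattice E] [AddCommGroup E] [Module ℝ E]
  [CovariantClass E E (· + ·) (· ≤ ·)] [PosSMulMono ℝ E]
variable [ConditionallyCompleteLattice G] [AddCommGroup G] [Module ℝ G]
  [CovariantClass G G (· + ·) (· ≤ ·)] [PosSMulMono ℝ G]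
variable (C : CRTP E G)

/-- the `p`-th power of `x ∈ E`, computed in the universal completion. -/
def powE (x : E) (p : ℝ) : E :=
  @Function.invFun E G ⟨0⟩ (⇑C.toCRT.j) (C.epow (C.toCRT.j x) p)

/-- `L^p(T) = {f ∈ L¹(T) : |f|^p ∈ L¹(T)}` for `p ∈ [1, ∞)`. -/
def LpSet (p : ℝ) : Set E := {f | C.epow (C.toCRT.j |f|) p ∈ Set.range ⇑C.toCRT.j}

/-- The `R(T)`-valued norm `‖f‖_{T,p} = (T |f|^p)^{1/p}`. -/
def nrmP (p : ℝ) (f : E) : E := C.powE (C.toCRT.T (C.powE |f| p)) (1 / p)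

end CRTP

/-! For disjoint components `p₁, p₂`, every component `q ≤ p₁ + p₂` splits as
`q ⊓ p₁ + q ⊓ p₂` (a lattice-ordered group is distributive and disjoint elements add like
their supremum). Hence the set `{μ q + ν (p - q) : q ∈ C_e, q ≤ p}` at `p₁ + p₂` is the
Minkowski sum of the sets at `p₁` and at `p₂`, so its supremum is additive in `p`: it is a
charge, bounded by the sum of the bounds of `μ` and `ν`. Taking `q = p` and `q = 0` shows that
it dominates `μ` and `ν`, and any charge `ξ ≥ μ, ν` satisfies
`μ q + ν (p - q) ≤ ξ q + ξ (p - q) = ξ p`. The infimum is minus the supremum of `-μ` and `-ν`,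
and `|μ|`, `μ⁺`, `μ⁻` are the suprema of `μ, -μ`, of `μ, 0` and of `-μ, 0`. -/

section LatticeOrderedGroup

theorem inf_eq_zero_of_le_of_le {α : Type*} [Lattice α] [Zero α] {a b c d : α} (ha : 0 ≤ a)
    (hb : 0 ≤ b) (hac : a ≤ c) (hbd : b ≤ d) (hcd : c ⊓ d = 0) : a ⊓ b = 0 :=
  le_antisymm (hcd ▸ inf_le_inf hac hbd) (le_inf ha hb)

variable {α : Type*} [Lattice α] [AddCommGroup α]

theorem abs_smul_le {R : Type*} [Ring R] [LinearOrder R] [IsOrderedRing R] [Module R α]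
    [PosSMulMono R α] (r : R) (a : α) : |r • a| ≤ |r| • |a| := by
  have of_nonneg : ∀ s : R, 0 ≤ s → ∀ b : α, |s • b| ≤ s • |b| := fun s hs b =>
    abs_le'.2 ⟨smul_le_smul_of_nonneg_left (le_abs_self b) hs,
      smul_neg s b ▸ smul_le_smul_of_nonneg_left (neg_le_abs b) hs⟩
  rcases le_total 0 r with hr | hr
  · rw [abs_of_nonneg hr]
    exact of_nonneg r hr a
  · simpa [abs_of_nonpos hr] using of_nonneg (-r) (neg_nonneg.2 hr) (-a)

variable [AddLeftMono α] {a b c : α}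

theorem add_eq_sup_of_inf_eq_zero (h : a ⊓ b = 0) : a + b = a ⊔ b := by
  rw [← inf_add_sup a b, h, zero_add]

theorem eq_inf_add_inf_of_le_add (ha : 0 ≤ a) (hbc : b ⊓ c = 0) (h : a ≤ b + c) :
    a = a ⊓ b + a ⊓ c := by
  let := AddCommGroup.toDistribLattice α
  have hdisj : a ⊓ b ⊓ (a ⊓ c) = 0 := by
    rw [inf_inf_inf_comm, inf_idem, hbc, inf_eq_right.2 ha]
  rw [add_eq_sup_of_inf_eq_zero hdisj, ← inf_sup_left, ← add_eq_sup_of_inf_eq_zero hbc,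
    inf_eq_left.2 h]

theorem abs_csSup_le {β : Type*} [ConditionallyCompleteLattice β] [AddCommGroup β]
    [AddLeftMono β] {s : Set β} {g : β} (hs : s.Nonempty) (h : ∀ v ∈ s, |v| ≤ g) :
    |sSup s| ≤ g := by
  obtain ⟨v, hv⟩ := hs
  have hbdd : BddAbove s := ⟨g, fun w hw => (le_abs_self w).trans (h w hw)⟩
  exact abs_le'.2 ⟨csSup_le ⟨v, hv⟩ fun w hw => (le_abs_self w).trans (h w hw),
    (neg_le_neg_iff.2 (le_csSup hbdd hv)).trans ((neg_le_abs v).trans (h v hv))⟩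

end LatticeOrderedGroup

section Components

variable {E : Type*} [Lattice E] [AddCommGroup E] {e p q : E}

theorem nonneg_of_mem_comp (hp : p ∈ Comp e) : 0 ≤ p :=
  (hp : p ⊓ (e - p) = 0) ▸ inf_le_left

theorem sub_nonneg_of_mem_comp (hp : p ∈ Comp e) : 0 ≤ e - p :=
  (hp : p ⊓ (e - p) = 0) ▸ inf_le_right

theorem zero_mem_comp (he : 0 ≤ e) : (0 : E) ∈ Comp e :=
  inf_eq_left.2 ((sub_zero e).symm ▸ he)

variable [AddLeftMono E]

theorem le_of_mem_comp (hp : p ∈ Comp e) : p ≤ e :=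
  sub_nonneg.1 (sub_nonneg_of_mem_comp hp)

theorem inf_sub_eq_zero_of_mem_comp (hp : p ∈ Comp e) (hq : q ∈ Comp e) (hqp : q ≤ p) :
    q ⊓ (p - q) = 0 :=
  inf_eq_zero_of_le_of_le (nonneg_of_mem_comp hq) (sub_nonneg.2 hqp) le_rfl
    (sub_le_sub_right (le_of_mem_comp hp) q) hq

theorem inf_mem_comp (hp : p ∈ Comp e) (hq : q ∈ Comp e) : p ⊓ q ∈ Comp e := by
  let := AddCommGroup.toDistribLattice E
  have hpq : 0 ≤ p ⊓ q := le_inf (nonneg_of_mem_comp hp) (nonneg_of_mem_comp hq)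
  show p ⊓ q ⊓ (e - p ⊓ q) = 0
  rw [sub_inf, inf_sup_left,
    inf_eq_zero_of_le_of_le hpq (sub_nonneg_of_mem_comp hp) inf_le_left le_rfl hp,
    inf_eq_zero_of_le_of_le hpq (sub_nonneg_of_mem_comp hq) inf_le_right le_rfl hq, sup_idem]

theorem add_mem_comp (hp : p ∈ Comp e) (hq : q ∈ Comp e) (hpq : p ⊓ q = 0) :
    p + q ∈ Comp e := by
  let := AddCommGroup.toDistribLattice E
  have hrest : 0 ≤ e - (p + q) := by
    rw [sub_nonneg, add_eq_sup_of_inf_eq_zero hpq]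
    exact sup_le (le_of_mem_comp hp) (le_of_mem_comp hq)
  show (p + q) ⊓ (e - (p + q)) = 0
  nth_rw 1 [add_eq_sup_of_inf_eq_zero hpq]
  rw [inf_sup_right,
    inf_eq_zero_of_le_of_le (nonneg_of_mem_comp hp) hrest le_rfl
      (sub_le_sub_left (le_add_of_nonneg_right (nonneg_of_mem_comp hq)) e) hp,
    inf_eq_zero_of_le_of_le (nonneg_of_mem_comp hq) hrest le_rfl
      (sub_le_sub_left (le_add_of_nonneg_left (nonneg_of_mem_comp hp)) e) hq, sup_idem]

theorem sub_mem_comp (hp : p ∈ Comp e) (hq : q ∈ Comp e) (hqp : q ≤ p) : p - q ∈ Comp e := by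
  let := AddCommGroup.toDistribLattice E
  have hpq : 0 ≤ p - q := sub_nonneg.2 hqp
  have hdisj : (e - p) ⊓ q = 0 :=
    inf_eq_zero_of_le_of_le (sub_nonneg_of_mem_comp hp) (nonneg_of_mem_comp hq) le_rfl hqp
      (inf_comm p (e - p) ▸ hp)
  show (p - q) ⊓ (e - (p - q)) = 0
  rw [show e - (p - q) = (e - p) + q by abel, add_eq_sup_of_inf_eq_zero hdisj, inf_sup_left,
    inf_eq_zero_of_le_of_le hpq (sub_nonneg_of_mem_comp hp)
      (sub_le_self p (nonneg_of_mem_comp hq)) le_rfl hp,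
    inf_comm, inf_sub_eq_zero_of_mem_comp hp hq hqp, sup_idem]

end Components

section Charges

variable {E : Type*} [Lattice E] [AddCommGroup E] {F : Type*} [AddCommGroup F]
  {e p q : E} {μ ν : E → F}

theorem IsChargeOn.add (hμ : IsChargeOn e μ) (hν : IsChargeOn e ν) : IsChargeOn e (μ + ν) :=
  ⟨by simp [hμ.1, hν.1], fun p q hp hq hpq => by
    simp only [Pi.add_apply, hμ.2 p q hp hq hpq, hν.2 p q hp hq hpq]
    abel⟩

theorem IsChargeOn.neg (hμ : IsChargeOn e μ) : IsChargeOn e (-μ) :=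
  ⟨by simp [hμ.1], fun p q hp hq hpq => by
    simp only [Pi.neg_apply, hμ.2 p q hp hq hpq, neg_add]⟩

theorem IsChargeOn.smul {R : Type*} [Monoid R] [DistribMulAction R F] (hμ : IsChargeOn e μ)
    (r : R) : IsChargeOn e (r • μ) :=
  ⟨by simp [hμ.1], fun p q hp hq hpq => by
    simp only [Pi.smul_apply, hμ.2 p q hp hq hpq, smul_add]⟩

theorem IsChargeOn.apply_eq_add_apply_sub [AddLeftMono E] (hμ : IsChargeOn e μ)
    (hp : p ∈ Comp e) (hq : q ∈ Comp e) (hqp : q ≤ p) : μ p = μ q + μ (p - q) := by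
  simpa using hμ.2 q (p - q) hq (sub_mem_comp hp hq hqp) (inf_sub_eq_zero_of_mem_comp hp hq hqp)

variable [Lattice F]

theorem OrdBddOn.neg (hμ : OrdBddOn e μ) : OrdBddOn e (-μ) := by
  simpa [OrdBddOn] using hμ

theorem neg_mem_baSet (hμ : μ ∈ baSet e) : -μ ∈ baSet e :=
  ⟨hμ.1.neg, hμ.2.neg⟩

theorem OrdBddOn.smul {R : Type*} [Ring R] [LinearOrder R] [IsOrderedRing R] [Module R F]
    [PosSMulMono R F] (hμ : OrdBddOn e μ) (r : R) : OrdBddOn e (r • μ) := by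
  obtain ⟨g, hg0, hg⟩ := hμ
  exact ⟨|r| • g, smul_nonneg (abs_nonneg r) hg0, fun p hp =>
    (abs_smul_le r (μ p)).trans (smul_le_smul_of_nonneg_left (hg p hp) (abs_nonneg r))⟩

theorem smul_mem_baSet {R : Type*} [Ring R] [LinearOrder R] [IsOrderedRing R] [Module R F]
    [PosSMulMono R F] (hμ : μ ∈ baSet e) (r : R) : r • μ ∈ baSet e :=
  ⟨hμ.1.smul r, hμ.2.smul r⟩

variable [AddLeftMono F]

theorem zero_mem_baSet : (0 : E → F) ∈ baSet e :=
  ⟨⟨rfl, fun _ _ _ _ _ => (add_zero 0).symm⟩, 0, le_rfl, fun _ _ => abs_zero.le⟩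

theorem OrdBddOn.add (hμ : OrdBddOn e μ) (hν : OrdBddOn e ν) : OrdBddOn e (μ + ν) := by
  obtain ⟨g, hg0, hg⟩ := hμ
  obtain ⟨h, hh0, hh⟩ := hν
  exact ⟨g + h, add_nonneg hg0 hh0, fun p hp =>
    (abs_add_le _ _).trans (add_le_add (hg p hp) (hh p hp))⟩

theorem add_mem_baSet (hμ : μ ∈ baSet e) (hν : ν ∈ baSet e) : μ + ν ∈ baSet e :=
  ⟨hμ.1.add hν.1, hμ.2.add hν.2⟩

end Charges

section BaOrder

open scoped Pointwise

variable {E : Type*} [Lattice E] [AddCommGroup E] {F : Type*} [Lattice F] [AddCommGroup F]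
  {e : E} {S : Set (E → F)} {η η' : E → F}

theorem mem_baSet_of_eqOn [AddLeftMono E] (he : 0 ≤ e) (hη : η ∈ baSet e)
    (h : Set.EqOn η η' (Comp e)) : η' ∈ baSet e := by
  obtain ⟨⟨h0, hadd⟩, g, hg0, hg⟩ := hη
  refine ⟨⟨(h (zero_mem_comp he)).symm.trans h0, fun p q hp hq hpq => ?_⟩, g, hg0,
    fun p hp => h hp ▸ hg p hp⟩
  rw [← h hp, ← h hq, ← h (add_mem_comp hp hq hpq), hadd p q hp hq hpq]

theorem IsGLBba.congr [AddLeftMono E] (he : 0 ≤ e) (hη : IsGLBba e S η)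
    (h : Set.EqOn η η' (Comp e)) : IsGLBba e S η' :=
  ⟨mem_baSet_of_eqOn he hη.1 h, fun μ hμ p hp => h hp ▸ hη.2.1 μ hμ p hp,
    fun ξ hξ hlb p hp => h hp ▸ hη.2.2 ξ hξ hlb p hp⟩

variable [AddLeftMono F]

theorem IsLUBba.neg (h : IsLUBba e S η) : IsGLBba e (-S) (-η) := by
  refine ⟨neg_mem_baSet h.1, fun μ hμ p hp => neg_le.1 (h.2.1 (-μ) hμ p hp), ?_⟩
  intro ξ hξ hlb p hp
  refine le_neg.2 (h.2.2 (-ξ) (neg_mem_baSet hξ) (fun μ hμ q hq => ?_) p hp)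
  exact le_neg.1 (hlb (-μ) (by rwa [Set.mem_neg, neg_neg]) q hq)

end BaOrder

section SplitSums

open scoped Pointwise

variable {E : Type*} [Lattice E] [AddCommGroup E] {F : Type*} [AddCommGroup F]
  {e p q p₁ p₂ : E} {μ ν : E → F}

def splitSums (e : E) (μ ν : E → F) (p : E) : Set F :=
  {v | ∃ q, q ∈ Comp e ∧ q ≤ p ∧ v = μ q + ν (p - q)}

theorem left_mem_splitSums (hν : ν 0 = 0) (hp : p ∈ Comp e) : μ p ∈ splitSums e μ ν p :=
  ⟨p, hp, le_rfl, by rw [sub_self, hν, add_zero]⟩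

theorem splitSums_nonempty (hν : ν 0 = 0) (hp : p ∈ Comp e) : (splitSums e μ ν p).Nonempty :=
  ⟨_, left_mem_splitSums hν hp⟩

theorem splitSums_neg : splitSums e (-μ) (-ν) p = -splitSums e μ ν p := by
  ext v
  simp only [splitSums, Set.mem_neg, Set.mem_ofPred_eq, Pi.neg_apply, neg_eq_iff_eq_neg, neg_add]

theorem right_mem_splitSums (he : 0 ≤ e) (hμ : μ 0 = 0) (hp : p ∈ Comp e) :
    ν p ∈ splitSums e μ ν p :=
  ⟨0, zero_mem_comp he, nonneg_of_mem_comp hp, by rw [sub_zero, hμ, zero_add]⟩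

theorem splitSums_zero (he : 0 ≤ e) (hμ : μ 0 = 0) (hν : ν 0 = 0) :
    splitSums e μ ν 0 = {0} := by
  refine Set.eq_singleton_iff_unique_mem.2 ⟨?_, ?_⟩
  · simpa [hμ] using left_mem_splitSums (μ := μ) hν (zero_mem_comp he)
  · rintro _ ⟨q, hq, hq0, rfl⟩
    rw [le_antisymm hq0 (nonneg_of_mem_comp hq), sub_zero, hμ, hν, add_zero]

variable [AddLeftMono E]

theorem splitSums_add (hμ : IsChargeOn e μ) (hν : IsChargeOn e ν) (hp₁ : p₁ ∈ Comp e)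
    (hp₂ : p₂ ∈ Comp e) (hp : p₁ ⊓ p₂ = 0) :
    splitSums e μ ν (p₁ + p₂) = splitSums e μ ν p₁ + splitSums e μ ν p₂ := by
  have hdisj : ∀ {q₁ q₂}, q₁ ∈ Comp e → q₂ ∈ Comp e → q₁ ≤ p₁ → q₂ ≤ p₂ → q₁ ⊓ q₂ = 0 :=
    fun hq₁ hq₂ h₁ h₂ =>
      inf_eq_zero_of_le_of_le (nonneg_of_mem_comp hq₁) (nonneg_of_mem_comp hq₂) h₁ h₂ hp
  have hsplit : ∀ {q₁ q₂}, q₁ ∈ Comp e → q₂ ∈ Comp e → q₁ ≤ p₁ → q₂ ≤ p₂ →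
      μ (q₁ + q₂) + ν (p₁ + p₂ - (q₁ + q₂)) = μ q₁ + ν (p₁ - q₁) + (μ q₂ + ν (p₂ - q₂)) := by
    intro q₁ q₂ hq₁ hq₂ h₁ h₂
    have hr : (p₁ - q₁) ⊓ (p₂ - q₂) = 0 :=
      inf_eq_zero_of_le_of_le (sub_nonneg.2 h₁) (sub_nonneg.2 h₂)
        (sub_le_self _ (nonneg_of_mem_comp hq₁)) (sub_le_self _ (nonneg_of_mem_comp hq₂)) hp
    rw [hμ.2 _ _ hq₁ hq₂ (hdisj hq₁ hq₂ h₁ h₂), add_sub_add_comm,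
      hν.2 _ _ (sub_mem_comp hp₁ hq₁ h₁) (sub_mem_comp hp₂ hq₂ h₂) hr]
    abel
  ext v
  constructor
  · rintro ⟨q, hq, hqp, rfl⟩
    have hq₁ := inf_mem_comp hq hp₁
    have hq₂ := inf_mem_comp hq hp₂
    refine ⟨_, ⟨q ⊓ p₁, hq₁, inf_le_right, rfl⟩, _, ⟨q ⊓ p₂, hq₂, inf_le_right, rfl⟩, ?_⟩
    dsimp only
    rw [← hsplit hq₁ hq₂ inf_le_right inf_le_right,
      ← eq_inf_add_inf_of_le_add (nonneg_of_mem_comp hq) hp hqp]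
  · rintro ⟨_, ⟨q₁, hq₁, h₁, rfl⟩, _, ⟨q₂, hq₂, h₂, rfl⟩, rfl⟩
    exact ⟨q₁ + q₂, add_mem_comp hq₁ hq₂ (hdisj hq₁ hq₂ h₁ h₂), add_le_add h₁ h₂,
      (hsplit hq₁ hq₂ h₁ h₂).symm⟩

variable [Lattice F] [AddLeftMono F]

theorem abs_le_of_mem_splitSums {gμ gν v : F} (hgμ : ∀ p ∈ Comp e, |μ p| ≤ gμ)
    (hgν : ∀ p ∈ Comp e, |ν p| ≤ gν) (hp : p ∈ Comp e) (hv : v ∈ splitSums e μ ν p) :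
    |v| ≤ gμ + gν := by
  obtain ⟨q, hq, hqp, rfl⟩ := hv
  exact (abs_add_le _ _).trans (add_le_add (hgμ q hq) (hgν _ (sub_mem_comp hp hq hqp)))

theorem bddAbove_splitSums (hμ : OrdBddOn e μ) (hν : OrdBddOn e ν) (hp : p ∈ Comp e) :
    BddAbove (splitSums e μ ν p) := by
  obtain ⟨gμ, -, hgμ⟩ := hμ
  obtain ⟨gν, -, hgν⟩ := hν
  exact ⟨gμ + gν, fun v hv => (le_abs_self v).trans (abs_le_of_mem_splitSums hgμ hgν hp hv)⟩

theorem bddBelow_splitSums (hμ : OrdBddOn e μ) (hν : OrdBddOn e ν) (hp : p ∈ Comp e) :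
    BddBelow (splitSums e μ ν p) := by
  obtain ⟨gμ, -, hgμ⟩ := hμ
  obtain ⟨gν, -, hgν⟩ := hν
  exact ⟨-(gμ + gν), fun v hv =>
    neg_le.1 ((neg_le_abs v).trans (abs_le_of_mem_splitSums hgμ hgν hp hv))⟩

end SplitSums

section LatticeFormulas

variable {E : Type*} [Lattice E] [AddCommGroup E] [AddLeftMono E]
  {F : Type*} [ConditionallyCompleteLattice F] [AddCommGroup F] [AddLeftMono F]
  {e : E} {μ ν : E → F}

theorem isChargeOn_chSupAt (he : 0 ≤ e) (hμ : μ ∈ baSet e) (hν : ν ∈ baSet e) :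
    IsChargeOn e (chSupAt e μ ν) := by
  refine ⟨?_, fun p₁ p₂ hp₁ hp₂ hp => ?_⟩
  · change sSup (splitSums e μ ν 0) = 0
    rw [splitSums_zero he hμ.1.1 hν.1.1, csSup_singleton]
  · change sSup (splitSums e μ ν (p₁ + p₂)) =
      sSup (splitSums e μ ν p₁) + sSup (splitSums e μ ν p₂)
    rw [splitSums_add hμ.1 hν.1 hp₁ hp₂ hp,
      csSup_add (splitSums_nonempty hν.1.1 hp₁) (bddAbove_splitSums hμ.2 hν.2 hp₁)
        (splitSums_nonempty hν.1.1 hp₂) (bddAbove_splitSums hμ.2 hν.2 hp₂)]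

theorem ordBddOn_chSupAt (hμ : μ ∈ baSet e) (hν : ν ∈ baSet e) : OrdBddOn e (chSupAt e μ ν) := by
  obtain ⟨gμ, hgμ0, hgμ⟩ := hμ.2
  obtain ⟨gν, hgν0, hgν⟩ := hν.2
  exact ⟨gμ + gν, add_nonneg hgμ0 hgν0, fun p hp => abs_csSup_le (splitSums_nonempty hν.1.1 hp)
    fun v hv => abs_le_of_mem_splitSums hgμ hgν hp hv⟩

theorem isLUBba_chSupAt (he : 0 ≤ e) (hμ : μ ∈ baSet e) (hν : ν ∈ baSet e) :
    IsLUBba e {μ, ν} (chSupAt e μ ν) := by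
  refine ⟨⟨isChargeOn_chSupAt he hμ hν, ordBddOn_chSupAt hμ hν⟩, ?_, ?_⟩
  · rintro ρ (rfl | rfl) p hp
    · exact le_csSup (bddAbove_splitSums hμ.2 hν.2 hp) (left_mem_splitSums hν.1.1 hp)
    · exact le_csSup (bddAbove_splitSums hμ.2 hν.2 hp) (right_mem_splitSums he hμ.1.1 hp)
  · intro ξ hξ hub p hp
    refine csSup_le (splitSums_nonempty hν.1.1 hp) ?_
    rintro _ ⟨q, hq, hqp, rfl⟩
    rw [hξ.1.apply_eq_add_apply_sub hp hq hqp]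
    exact add_le_add (hub μ (Set.mem_insert _ _) q hq)
      (hub ν (Set.mem_insert_of_mem _ rfl) _ (sub_mem_comp hp hq hqp))

open scoped Pointwise in
theorem chInfAt_eq_neg_chSupAt_neg (hμ : μ ∈ baSet e) (hν : ν ∈ baSet e) {p : E}
    (hp : p ∈ Comp e) : chInfAt e μ ν p = -chSupAt e (-μ) (-ν) p := by
  change sInf (splitSums e μ ν p) = -sSup (splitSums e (-μ) (-ν) p)
  rw [splitSums_neg, csSup_neg (splitSums_nonempty hν.1.1 hp) (bddBelow_splitSums hμ.2 hν.2 hp),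
    neg_neg]

/- `chInfAt` and `-chSupAt e (-μ) (-ν)` agree only on components: elsewhere the sets may be
empty, and there `sSup` and `sInf` take unrelated junk values. -/
open scoped Pointwise in
theorem isGLBba_chInfAt (he : 0 ≤ e) (hμ : μ ∈ baSet e) (hν : ν ∈ baSet e) :
    IsGLBba e {μ, ν} (chInfAt e μ ν) := by
  have h := (isLUBba_chSupAt he (neg_mem_baSet hμ) (neg_mem_baSet hν)).neg
  rw [Set.neg_insert, Set.neg_singleton, neg_neg, neg_neg] at h
  exact h.congr he fun p hp => (chInfAt_eq_neg_chSupAt_neg hμ hν hp).symm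

end LatticeFormulas

section Parts

variable {E : Type*} [Lattice E] [AddCommGroup E] {F : Type*} [ConditionallyCompleteLattice F]
  [AddCommGroup F] {e : E} {μ : E → F}

theorem chargeAbs_eq_chSupAt : chargeAbs e μ = chSupAt e μ (-μ) := by
  funext p
  simp only [chargeAbs, chSupAt, Pi.neg_apply, sub_eq_add_neg]

theorem chargePos_eq_chSupAt : chargePos e μ = chSupAt e μ 0 := by
  funext p
  simp only [chargePos, chSupAt, Pi.zero_apply, add_zero]

theorem chargeNeg_eq_chSupAt : chargeNeg e μ = chSupAt e (-μ) 0 := by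
  funext p
  simp only [chargeNeg, chSupAt, Pi.neg_apply, Pi.zero_apply, add_zero]

end Parts

theorem ba_isRieszSpace_and_lattice_formulas_general
    {E : Type u} [Lattice E] [AddCommGroup E]
    [CovariantClass E E (· + ·) (· ≤ ·)]
    {F : Type v} [ConditionallyCompleteLattice F] [AddCommGroup F] [Module ℝ F]
    [CovariantClass F F (· + ·) (· ≤ ·)] [PosSMulMono ℝ F]
    (e : E) (he : IsWeakUnit e) :
    (∀ μ ∈ baSet (F := F) e, ∀ ν ∈ baSet (F := F) e, (fun p => μ p + ν p) ∈ baSet (F := F) e) ∧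
    (∀ μ ∈ baSet (F := F) e, ∀ r : ℝ, (fun p => r • μ p) ∈ baSet (F := F) e) ∧
    (∀ μ ∈ baSet (F := F) e, (fun p => -(μ p)) ∈ baSet (F := F) e) ∧
    (∀ μ ∈ baSet (F := F) e, ∀ ν ∈ baSet (F := F) e,
      IsLUBba e {μ, ν} (chSupAt e μ ν)) ∧
    (∀ μ ∈ baSet (F := F) e, ∀ ν ∈ baSet (F := F) e,
      IsGLBba e {μ, ν} (chInfAt e μ ν)) ∧
    (∀ μ ∈ baSet (F := F) e, IsLUBba e {μ, fun p => -(μ p)} (chargeAbs e μ)) ∧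
    (∀ μ ∈ baSet (F := F) e, IsLUBba e {μ, 0} (chargePos e μ)) ∧
    (∀ μ ∈ baSet (F := F) e, IsLUBba e {fun p => -(μ p), 0} (chargeNeg e μ)) := by
  have he₀ : 0 ≤ e := he.1.le
  refine ⟨fun μ hμ ν hν => add_mem_baSet hμ hν, fun μ hμ r => smul_mem_baSet hμ r,
    fun μ hμ => neg_mem_baSet hμ, fun μ hμ ν hν => isLUBba_chSupAt he₀ hμ hν,
    fun μ hμ ν hν => isGLBba_chInfAt he₀ hμ hν, fun μ hμ => ?_, fun μ hμ => ?_, fun μ hμ => ?_⟩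
  · rw [chargeAbs_eq_chSupAt]
    exact isLUBba_chSupAt he₀ hμ (neg_mem_baSet hμ)
  · rw [chargePos_eq_chSupAt]
    exact isLUBba_chSupAt he₀ hμ zero_mem_baSet
  · rw [chargeNeg_eq_chSupAt]
    exact isLUBba_chSupAt he₀ (neg_mem_baSet hμ) zero_mem_baSet

/-- Let `E` be a Riesz space with weak order unit `e` and `F` a
Dedekind complete Riesz space.  Then `ba(C_e,F)`, ordered by `μ ≤ ν` iff `ν − μ` is a
positive charge, is a Riesz space: it is closed under the vector operations, and for
`μ, ν ∈ ba(C_e,F)` the suprema/infima/modulus/positive and negative parts exist in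
`ba(C_e,F)` and are given by the stated formulas. -/
theorem ba_isRieszSpace_and_lattice_formulas
    {E : Type u} [Lattice E] [AddCommGroup E] [Module ℝ E]
    [CovariantClass E E (· + ·) (· ≤ ·)] [PosSMulMono ℝ E]
    {F : Type v} [ConditionallyCompleteLattice F] [AddCommGroup F] [Module ℝ F]
    [CovariantClass F F (· + ·) (· ≤ ·)] [PosSMulMono ℝ F]
    (e : E) (he : IsWeakUnit e) :
    (∀ μ ∈ baSet (F := F) e, ∀ ν ∈ baSet (F := F) e, (fun p => μ p + ν p) ∈ baSet (F := F) e) ∧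
    (∀ μ ∈ baSet (F := F) e, ∀ r : ℝ, (fun p => r • μ p) ∈ baSet (F := F) e) ∧
    (∀ μ ∈ baSet (F := F) e, (fun p => -(μ p)) ∈ baSet (F := F) e) ∧
    (∀ μ ∈ baSet (F := F) e, ∀ ν ∈ baSet (F := F) e,
      IsLUBba e {μ, ν} (chSupAt e μ ν)) ∧
    (∀ μ ∈ baSet (F := F) e, ∀ ν ∈ baSet (F := F) e,
      IsGLBba e {μ, ν} (chInfAt e μ ν)) ∧
    (∀ μ ∈ baSet (F := F) e, IsLUBba e {μ, fun p => -(μ p)} (chargeAbs e μ)) ∧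
    (∀ μ ∈ baSet (F := F) e, IsLUBba e {μ, 0} (chargePos e μ)) ∧
    (∀ μ ∈ baSet (F := F) e, IsLUBba e {fun p => -(μ p), 0} (chargeNeg e μ)) :=
  ba_isRieszSpace_and_lattice_formulas_general e he

end RieszPaper

end
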